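/- For any 4-colored graph (Γ,γ), the Euler characteristic of the associated 3-pseudocomplex satisfies χ(K(Γ)) = Σ_{i∈Δ₃} ω_G(Γ_{î}), where χ(K(Γ)) = Σ_{i∈Δ₃} g_{î} − Σ_{{i,j}} g_{ij} + 2p and, for each i ∈ Δ₃, ω_G(Γ_{î}) is the sum of the G-degrees of the connected components of the 3-colored graph Γ_{î}. -/

import Mathlib

/-!
Basic framework: edge-colored graphs à la crystallization theory.

A `(d+1)`-colored graph (finite connected multigraph, regular of degree `d+1`, with a proper
edge-coloring by the color set `C`, `#C = d+1`) is encoded by giving, for each color `c`,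
the perfect matching formed by the `c`-colored edges, i.e. a fixed-point-free involution
`inv c` on the vertex set `V` (connectedness is the separate predicate `Conn`).
-/

structure CGraph (C V : Type) where
  inv : C → V → V
  invol : ∀ c v, inv c (inv c v) = v
  no_fixed : ∀ c v, inv c v ≠ v

namespace CGraph

variable {C V : Type}

/-- `g G B` = number of connected components of the spanning subgraph `Γ_B` consisting of
the edges whose color lies in `B`. -/
noncomputable def g (G : CGraph C V) (B : Set C) : ℕ :=
  Nat.card (Quotient (Relation.EqvGen.setoid (fun v w : V => ∃ c ∈ B, G.inv c v = w)))

/-- connectedness of the colored graph -/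
def Conn (G : CGraph C V) : Prop := G.g Set.univ = 1

/-- the spanning subgraph `Γ_B` of edges colored in `B`, as a colored graph with color set `B` -/
def restrict (G : CGraph C V) (B : Set C) : CGraph B V where
  inv c v := G.inv c.val v
  invol c v := G.invol c.val v
  no_fixed c v := G.no_fixed c.val v

/-- reachability in the colored graph -/
def reach (G : CGraph C V) : V → V → Prop :=
  Relation.EqvGen (fun v w : V => ∃ c, G.inv c v = w)

/-- the connected component of `G` containing `v0`, as a colored graph on the vertices
reachable from `v0` -/
def component (G : CGraph C V) (v0 : V) : CGraph C {w : V // G.reach v0 w} where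
  inv c w := ⟨G.inv c w.val,
    Relation.EqvGen.trans _ _ _ w.property (Relation.EqvGen.rel _ _ ⟨c, rfl⟩)⟩
  invol c w := Subtype.ext (G.invol c w.val)
  no_fixed c w h := G.no_fixed c w.val (congrArg Subtype.val h)

/-- A cyclic permutation of the (finite) color set: a permutation consisting of a single cycle
through all the colors.  Cyclic permutations `ε = (ε_0, …, ε_d)` of the color set, up to
rotation, correspond bijectively to such permutations `σ` (via `σ : ε_j ↦ ε_{j+1}`), and
taking the inverse cyclic permutation corresponds to `σ ↦ σ⁻¹`. -/
def IsCyclicPerm (σ : Equiv.Perm C) : Prop := σ.IsCycle ∧ ∀ c, σ c ≠ c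

/-- Euler characteristic `χ_σ(Γ) = Σ_{j} g_{ε_j ε_{j+1}} + (1-(n-1))·p` of the surface of the
regular embedding associated with the cyclic permutation `σ`; here `n = #C`, the graph has
order `2p` (i.e. `p = (#V)/2`), and the consecutive pairs `{ε_j, ε_{j+1}}` are exactly the
pairs `{c, σ c}`, `c ∈ C`. -/
noncomputable def chi (G : CGraph C V) (σ : Equiv.Perm C) : ℚ :=
  (∑ᶠ c : C, (G.g {c, σ c} : ℚ)) +
    (2 - (Nat.card C : ℚ)) * ((Nat.card V : ℚ) / 2)

/-- the genus `ρ_σ` of the regular embedding associated with `σ`: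
for a connected graph it is `(2 - χ_σ)/2`; in general (`g G Set.univ` connected components)
it is the sum of the genera of the connected components, matching the convention that the
genus/G-degree of a disconnected colored graph is the sum over its connected components. -/
noncomputable def rho (G : CGraph C V) (σ : Equiv.Perm C) : ℚ :=
  (2 * (G.g Set.univ : ℚ) - G.chi σ) / 2

/-- the Gurau degree `ω_G(Γ) = Σ ρ_ε(Γ)`, the sum over the cyclic permutations of the color
set up to inverse; each class `{σ, σ⁻¹}` has `ρ_σ = ρ_{σ⁻¹}`, whence the division by `2`. -/
noncomputable def omegaG (G : CGraph C V) : ℚ :=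
  (∑ᶠ σ : {σ : Equiv.Perm C // IsCyclicPerm σ}, G.rho σ.val) / 2

/-- bipartiteness -/
def Bipartite (G : CGraph C V) : Prop := ∃ f : V → Bool, ∀ c v, f (G.inv c v) ≠ f v

/-- color-preserving isomorphism of colored graphs -/
def IsIso {V' : Type} (G : CGraph C V) (G' : CGraph C V') : Prop :=
  ∃ e : V ≃ V', ∀ c v, e (G.inv c v) = G'.inv c (e v)

/-!
On three colors the cyclic permutations are the two 3-cycles, and for each of them the
consecutive pairs `{c, σ c}` run once through the three pairs of colors. So `χ_σ` does not
depend on `σ`, and a 3-colored graph `Ξ` on `V` has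
`ω_G(Ξ) = g(Ξ) - (g_{ab} + g_{bc} + g_{ac}) / 2 + #V / 4`.
Summing this over the four `Γ_î`, each pair of colors `{r, s}` is counted by the two `Γ_î`
with `i ∉ {r, s}`, and the four vertex terms `#V / 4` add up to `2p`.
-/

open Equiv Finset

theorem IsCyclicPerm.support_eq_univ [Fintype C] [DecidableEq C] {σ : Perm C}
    (hσ : IsCyclicPerm σ) : σ.support = univ :=
  eq_univ_iff_forall.2 fun c => Perm.mem_support.2 (hσ.2 c)

theorem isCyclicPerm_iff_cycleType [Fintype C] [DecidableEq C] (σ : Perm C) :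
    IsCyclicPerm σ ↔ σ.cycleType = {Fintype.card C} := by
  constructor
  · intro hσ
    rw [hσ.1.cycleType, hσ.support_eq_univ, card_univ]
  · intro h
    have hsupp : σ.support = univ := by
      apply eq_univ_of_card
      rw [← Perm.sum_cycleType, h, Multiset.sum_singleton]
    refine ⟨Perm.card_cycleType_eq_one.1 (by rw [h]; rfl), fun c => ?_⟩
    exact Perm.mem_support.1 (hsupp ▸ mem_univ c)

theorem card_isCyclicPerm [Fintype C] [DecidableEq C] (hC : 2 ≤ Fintype.card C) :
    Nat.card {σ : Perm C // IsCyclicPerm σ} = (Fintype.card C - 1).factorial := by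
  simp_rw [isCyclicPerm_iff_cycleType]
  rw [Nat.card_eq_fintype_card, Fintype.card_subtype,
    Perm.card_of_cycleType_singleton hC le_rfl, Nat.choose_self, mul_one]

section ThreeColors

variable [Fintype C] [DecidableEq C] (hC : Fintype.card C = 3) {σ : Perm C}
include hC

theorem IsCyclicPerm.apply_ne_inv_apply (hσ : IsCyclicPerm σ) (c : C) : σ c ≠ σ⁻¹ c := by
  have horder : orderOf σ = 3 := by rw [hσ.1.orderOf, hσ.support_eq_univ, card_univ, hC]
  intro h
  have hsq : σ ^ 2 = 1 := (hσ.1.pow_eq_one_iff' (hσ.2 c)).2 <| by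
    rw [pow_two, Perm.mul_apply]; exact Perm.eq_inv_iff_eq.1 h
  have := orderOf_dvd_of_pow_eq_one hsq
  rw [horder] at this
  norm_num at this

theorem IsCyclicPerm.sum_offDiag_eq {M : Type*} [AddCommMonoid M] (hσ : IsCyclicPerm σ)
    (f : C → C → M) (hf : ∀ c d, f c d = f d c) :
    ∑ c, ∑ d, (if c = d then 0 else f c d) = 2 • ∑ c, f c (σ c) := by
  have hrow : ∀ c, ∑ d, (if c = d then 0 else f c d) = f c (σ c) + f c (σ⁻¹ c) := by
    intro c
    have h1 : c ≠ σ c := (hσ.2 c).symm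
    have h2 : c ≠ σ⁻¹ c := fun h => hσ.2 c (Perm.inv_eq_iff_eq.1 h.symm).symm
    have h3 := hσ.apply_ne_inv_apply hC c
    have huniv : (univ : Finset C) = {c, σ c, σ⁻¹ c} := by
      refine (eq_univ_of_card _ ?_).symm
      rw [card_insert_of_notMem (by simpa using ⟨h1, h2⟩), card_pair h3, hC]
    rw [huniv, sum_insert (by simpa using ⟨h1, h2⟩), sum_pair h3, if_pos rfl, if_neg h1,
      if_neg h2, zero_add]
  have hinv : ∑ c, f c (σ⁻¹ c) = ∑ c, f c (σ c) := by
    rw [← Equiv.sum_comp σ]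
    simp only [Perm.coe_inv, symm_apply_apply, hf]
  rw [sum_congr rfl fun c _ => hrow c, sum_add_distrib, hinv, two_nsmul]

theorem chi_eq_of_card_eq_three (G : CGraph C V) (hσ : IsCyclicPerm σ) :
    G.chi σ = (∑ c, ∑ d, if c = d then 0 else (G.g {c, d} : ℚ)) / 2 - Nat.card V / 2 := by
  rw [chi, finsum_eq_sum_of_fintype,
    hσ.sum_offDiag_eq hC (fun c d => (G.g {c, d} : ℚ)) fun c d => by rw [Set.pair_comm],
    Nat.card_eq_fintype_card, hC]
  push_cast
  ring

theorem omegaG_of_card_eq_three (G : CGraph C V) :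
    G.omegaG = G.g Set.univ - (∑ c, ∑ d, if c = d then 0 else (G.g {c, d} : ℚ)) / 4
      + Nat.card V / 4 := by
  classical
  have hcard : Fintype.card {σ : Perm C // IsCyclicPerm σ} = 2 := by
    rw [← Nat.card_eq_fintype_card, card_isCyclicPerm (by omega), hC]
    rfl
  rw [omegaG, finsum_eq_sum_of_fintype,
    sum_congr rfl fun σ _ => by rw [rho, G.chi_eq_of_card_eq_three hC σ.2],
    sum_const, card_univ, hcard, nsmul_eq_mul]
  push_cast
  ring

end ThreeColors

theorem g_restrict (G : CGraph C V) (B : Set C) (B' : Set B) :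
    (G.restrict B).g B' = G.g (Subtype.val '' B') := by
  simp only [g, restrict, Set.exists_mem_image]

theorem sum_subtype_ne {M : Type*} [AddCommMonoid M] [Fintype C] [DecidableEq C] (i : C)
    (f : C → M) : ∑ r : ({c | c ≠ i} : Set C), f r = ∑ r, if r = i then 0 else f r := by
  rw [← sum_subtype (univ.filter (· ≠ i)) (by simp), sum_filter]
  exact sum_congr rfl fun r _ => by split_ifs <;> simp_all

theorem omegaG_restrict_compl [Fintype C] [DecidableEq C] (hC : Fintype.card C = 4)
    (G : CGraph C V) (i : C) :
    (G.restrict {c | c ≠ i}).omegaG = G.g {c | c ≠ i}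
      - (∑ r, ∑ s, if r = i ∨ s = i ∨ r = s then 0 else (G.g {r, s} : ℚ)) / 4
      + Nat.card V / 4 := by
  have hcard : Fintype.card ({c | c ≠ i} : Set C) = 3 := by
    simp [Fintype.card_subtype, filter_ne', hC]
  have hrow : ∀ r, ∑ s : ({c | c ≠ i} : Set C), (if r = s.val then 0 else (G.g {r, s.val} : ℚ))
      = ∑ s, if s = i then 0 else if r = s then 0 else (G.g {r, s} : ℚ) :=
    fun r => sum_subtype_ne i fun s => if r = s then 0 else (G.g {r, s} : ℚ)
  rw [omegaG_of_card_eq_three hcard, g_restrict, Set.image_univ, Subtype.range_coe]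
  simp only [g_restrict, Set.image_pair, Subtype.ext_iff, hrow]
  rw [sum_subtype_ne i (fun r => ∑ s, if s = i then 0 else if r = s then 0 else (G.g {r, s} : ℚ))]
  simp only [ite_or, sum_ite_irrel, sum_const_zero]

theorem sum_sum_sum_ite_or_eq_card_sub_two_smul {M : Type*} [AddCommMonoid M] [Fintype C] [DecidableEq C]
    (f : C → C → M) :
    ∑ i, ∑ r, ∑ s, (if r = i ∨ s = i ∨ r = s then 0 else f r s)
      = (Fintype.card C - 2) • ∑ r, ∑ s, if r = s then 0 else f r s := by
  rw [sum_comm, smul_sum]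
  refine sum_congr rfl fun r _ => ?_
  rw [sum_comm, smul_sum]
  refine sum_congr rfl fun s _ => ?_
  by_cases hrs : r = s
  · simp [hrs]
  · have hcard : #{i | ¬(r = i ∨ s = i)} = Fintype.card C - 2 := by
      have hpair : ({i | r = i ∨ s = i} : Finset C) = {r, s} := by
        ext i
        simp [eq_comm]
      rw [filter_not, hpair, card_univ_sdiff, card_pair hrs]
    simp only [hrs, or_false, if_false, sum_ite, sum_const_zero, zero_add, sum_const, hcard]

end CGraph

open CGraph in
theorem stmt9_general {p : ℕ} {V : Type}
    (G : CGraph (Fin 4) V) (horder : Nat.card V = 2 * p) :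
    (∑ i : Fin 4, (G.g {c | c ≠ i} : ℚ)) -
        (∑ r : Fin 4, ∑ s : Fin 4, if r = s then 0 else (G.g {r, s} : ℚ)) / 2 +
        2 * (p : ℚ) =
      ∑ i : Fin 4, (G.restrict {c | c ≠ i}).omegaG := by
  have hpairs := sum_sum_sum_ite_or_eq_card_sub_two_smul fun r s : Fin 4 => (G.g {r, s} : ℚ)
  simp only [omegaG_restrict_compl (Fintype.card_fin 4), Finset.sum_add_distrib,
    Finset.sum_sub_distrib, ← Finset.sum_div, hpairs, Finset.sum_const, Finset.card_univ,
    Fintype.card_fin, nsmul_eq_mul, horder]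
  push_cast
  ring

open CGraph in
/-- for any 4-colored graph, the Euler characteristic of the associated
3-pseudocomplex satisfies `χ(K(Γ)) = Σ_{i∈Δ₃} ω_G(Γ_î)`, where
`χ(K(Γ)) = Σ_i g_î − Σ_{{i,j}} g_{ij} + 2p` (pair sum over the six unordered pairs of distinct
colors, written as half the ordered sum) and `ω_G(Γ_î)` is the sum of the G-degrees of the
connected components of the 3-colored graph `Γ_î`. -/
theorem stmt9 {p : ℕ} {V : Type} [Finite V]
    (G : CGraph (Fin 4) V) (hconn : G.Conn) (horder : Nat.card V = 2 * p) :
    (∑ i : Fin 4, (G.g {c | c ≠ i} : ℚ)) -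
        (∑ r : Fin 4, ∑ s : Fin 4, if r = s then 0 else (G.g {r, s} : ℚ)) / 2 +
        2 * (p : ℚ) =
      ∑ i : Fin 4, (G.restrict {c | c ≠ i}).omegaG :=
  stmt9_general G horder
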